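/- Let F be a field of characteristic zero with a derivation δ, let K be a subfield of F closed under δ, and let η ∈ F be transcendental over K with F = K(η) and δη = p·η for some p ∈ K. Let c ∈ K and f ∈ F satisfy δf = c·η. Write f uniquely as f = Q(η) + R(η)/B(η), where Q, R, B ∈ K[Y], B is monic, deg R < deg B, and gcd(R, B) = 1, and let a₁ ∈ K be the coefficient of Y¹ in Q. Then c = δa₁ + p·a₁; equivalently, δf = δ(a₁·η). -/

import Mathlib

/-!
View `δ` as a derivation of `K[Y]` through evaluation at `η`: since `δη = p·η`, it acts on
polynomials by `Δ P = P^δ + p·Y·P'` (Mathlib's `Differential.implicitDeriv (C p * X)`), and `Δ`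
does not raise degrees. Differentiating `f = Q(η) + R(η)/B(η)` gives `c·Y = Δ Q + (Δ R · B - R · Δ B) / B²` in `K(Y)`. The last fraction
is again proper: `B` divides `R · Δ B`, hence `Δ B`, so `Δ B = s·B` with `s` constant and the
fraction is `(Δ R - s·R) / B`. Comparing polynomial parts, `Δ Q = c·Y`, and the coefficient
of `Y` reads `c = δa₁ + p·a₁`.
-/

open Polynomial
open scoped Differential

def Derivation.ofLeibniz {A : Type*} [CommRing A] (δ : A → A)
    (hadd : ∀ a b, δ (a + b) = δ a + δ b) (hmul : ∀ a b, δ (a * b) = a * δ b + δ a * b) :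
    Derivation ℤ A A :=
  Derivation.mk' (AddMonoidHom.mk' δ hadd).toIntLinearMap fun a b => by
    simp [hmul, mul_comm]

def Derivation.restrict {A S : Type*} [CommRing A] [SetLike S A] [SubringClass S A]
    (D : Derivation ℤ A A) (K : S) (hK : ∀ a ∈ K, D a ∈ K) : Derivation ℤ K K :=
  Derivation.mk'
    { toFun a := ⟨D a, hK a a.2⟩
      map_add' a b := Subtype.ext (D.map_add a b)
      map_smul' n a := Subtype.ext (D.map_smul n a) }
    fun a b => Subtype.ext (D.leibniz a b)

namespace Polynomial

variable {A : Type*} [CommRing A] [IsDomain A]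

theorem eq_zero_of_mul_sq_eq_of_isCoprime {P B G dP dB : A[X]} (hcop : IsCoprime P B)
    (hPB : P.degree < B.degree) (hdP : dP.degree ≤ P.degree) (hdB : dB.degree ≤ B.degree)
    (h : G * B ^ 2 = dP * B - P * dB) : G = 0 := by
  have hB : B ≠ 0 := ne_zero_of_degree_gt hPB
  obtain ⟨S, hS⟩ : B ∣ dB :=
    hcop.symm.dvd_of_dvd_mul_left ⟨dP - G * B, by linear_combination h⟩
  have hS0 : S.degree ≤ 0 := by
    rw [hS, degree_mul] at hdB
    conv_rhs at hdB => rw [← add_zero B.degree]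
    exact (WithBot.add_le_add_iff_left (degree_ne_bot.mpr hB)).mp hdB
  have hlt : (dP - P * S).degree < B.degree := by
    refine (degree_sub_le _ _).trans_lt (max_lt (hdP.trans_lt hPB) ?_)
    rw [degree_mul]
    exact (add_le_of_nonpos_right hS0).trans_lt hPB
  have hGB : G * B = dP - P * S := mul_right_cancel₀ hB (by linear_combination h - P * hS)
  by_contra hG
  rw [← hGB, degree_mul] at hlt
  exact hlt.not_ge (le_add_of_nonneg_left (zero_le_degree_iff.mpr hG))

end Polynomial

namespace Differential

variable {A : Type*} [CommRing A] [Differential A]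

theorem coeff_implicitDeriv_C_mul_X (a : A) (Q : A[X]) (n : ℕ) :
    (implicitDeriv (C a * X) Q).coeff n = (Q.coeff n)′ + n * a * Q.coeff n := by
  cases n with
  | zero => simp [implicitDeriv]
  | succ n =>
    simp only [implicitDeriv, Derivation.coe_add, Derivation.coe_smul, Pi.add_apply,
      Pi.smul_apply, Derivation.restrictScalars_apply, derivative'_apply, smul_eq_mul, mul_assoc,
      coeff_add, coeff_mapCoeffs, coeff_C_mul, coeff_X_mul, coeff_derivative]
    push_cast
    ring

theorem degree_implicitDeriv_le {v : A[X]} (hv : v.degree ≤ 1) (Q : A[X]) :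
    (implicitDeriv v Q).degree ≤ Q.degree := by
  rcases eq_or_ne Q 0 with rfl | hQ
  · simp
  rw [degree_eq_natDegree hQ]
  refine degree_le_of_natDegree_le (natDegree_add_le_of_degree_le ?_ ?_)
  · refine natDegree_le_iff_coeff_eq_zero.mpr fun m hm => ?_
    simp [coeff_eq_zero_of_natDegree_lt hm]
  · rcases Nat.eq_zero_or_pos Q.natDegree with h0 | hpos
    · simp [derivative_of_natDegree_zero h0]
    · calc (v * derivative Q).natDegree ≤ v.natDegree + (derivative Q).natDegree :=
            natDegree_mul_le
        _ ≤ 1 + (Q.natDegree - 1) :=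
            add_le_add (natDegree_le_of_degree_le hv) (natDegree_derivative_le Q)
        _ = Q.natDegree := by omega

theorem implicitDeriv_eq_of_deriv_aeval_add_div {R : Type*} [IsDomain A] [Field R]
    [Differential R] [Algebra A R] [DifferentialAlgebra A R]
    {x : R} (hx : Transcendental A x) {v : A[X]} (hxv : x′ = aeval x v) (hv : v.degree ≤ 1)
    {Q P B W : A[X]} (hcop : IsCoprime P B) (hPB : P.degree < B.degree)
    (h : (aeval x Q + aeval x P / aeval x B)′ = aeval x W) :
    implicitDeriv v Q = W := by
  have hinj : Function.Injective (aeval x : A[X] →ₐ[A] R) := transcendental_iff_injective.mp hx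
  have hB : aeval x B ≠ 0 := (map_ne_zero_iff _ hinj).mpr (ne_zero_of_degree_gt hPB)
  have hD := deriv_aeval_eq_implicitDeriv x v hxv
  have hpoly : (W - implicitDeriv v Q) * B ^ 2 =
      implicitDeriv v P * B - P * implicitDeriv v B := by
    apply hinj
    simp only [map_mul, map_sub, map_pow, ← hD, ← h, Derivation.leibniz_div, map_add,
      smul_eq_mul]
    field_simp
    ring
  exact (sub_eq_zero.mp (eq_zero_of_mul_sq_eq_of_isCoprime hcop hPB
    (degree_implicitDeriv_le hv P) (degree_implicitDeriv_le hv B) hpoly)).symm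

end Differential

theorem reduction_lemma_transcendental_case_general
    (F : Type*) [Field F]
    (δ : F → F)
    (hadd : ∀ a b : F, δ (a + b) = δ a + δ b)
    (hmul : ∀ a b : F, δ (a * b) = a * δ b + δ a * b)
    (K : Subfield F)
    (hKδ : ∀ a ∈ K, δ a ∈ K)
    (η : F) (htrans : Transcendental K η)
    (p : F) (hp : p ∈ K) (hδη : δ η = p * η)
    (c : F) (hc : c ∈ K)
    (f : F) (hf : δ f = c * η)
    (Q R B : Polynomial K)
    (hRB : R.degree < B.degree) (hcop : IsCoprime R B)
    (hrep : f = Polynomial.aeval η Q + Polynomial.aeval η R / Polynomial.aeval η B) :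
    c = δ ((Q.coeff 1 : K) : F) + p * ((Q.coeff 1 : K) : F) := by
  let : Differential F := ⟨Derivation.ofLeibniz δ hadd hmul⟩
  let : Differential K := ⟨Differential.deriv.restrict K hKδ⟩
  have : DifferentialAlgebra K F := ⟨fun _ => rfl⟩
  have hη : η′ = aeval η (C (⟨p, hp⟩ : K) * X) := by
    simp only [map_mul, aeval_C, aeval_X]
    exact hδη
  have hQ : Differential.implicitDeriv (C ⟨p, hp⟩ * X) Q = C (⟨c, hc⟩ : K) * X :=
    Differential.implicitDeriv_eq_of_deriv_aeval_add_div htrans hη (degree_C_mul_X_le _) hcop hRB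
      (by
        simp only [← hrep, map_mul, aeval_C, aeval_X]
        exact hf)
  have hcoeff := congrArg (coeff · 1) hQ
  simp only [Differential.coeff_implicitDeriv_C_mul_X, Nat.cast_one, one_mul, coeff_mul_X,
    coeff_C_zero] at hcoeff
  exact (congrArg Subtype.val hcoeff).symm

/-- **Transcendental case in the proof of (2) ⟹ (3) of the Reduction Lemma** (Lemma 3.1).
Let `F` be a field of characteristic zero with a derivation `δ`, `K` a subfield closed
under `δ`, and `η` transcendental over `K` with `F = K(η)` and `δη = p·η`, `p ∈ K`.
If `c ∈ K` and `f ∈ F` satisfy `δf = c·η`, and `f = Q(η) + R(η)/B(η)` is the unique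
representation with `Q, R, B ∈ K[Y]`, `B` monic, `deg R < deg B`, `gcd(R,B) = 1`,
then `c = δa₁ + p·a₁`, where `a₁` is the coefficient of `Y¹` in `Q`. -/
theorem reduction_lemma_transcendental_case
    (F : Type*) [Field F] [CharZero F]
    (δ : F → F)
    (hadd : ∀ a b : F, δ (a + b) = δ a + δ b)
    (hmul : ∀ a b : F, δ (a * b) = a * δ b + δ a * b)
    (K : Subfield F)
    (hKδ : ∀ a ∈ K, δ a ∈ K)
    (η : F) (htrans : Transcendental K η)
    (hgen : Subfield.closure (insert η (K : Set F)) = ⊤)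
    (p : F) (hp : p ∈ K) (hδη : δ η = p * η)
    (c : F) (hc : c ∈ K)
    (f : F) (hf : δ f = c * η)
    (Q R B : Polynomial K)
    (hB : B.Monic) (hRB : R.degree < B.degree) (hcop : IsCoprime R B)
    (hrep : f = Polynomial.aeval η Q + Polynomial.aeval η R / Polynomial.aeval η B) :
    c = δ ((Q.coeff 1 : K) : F) + p * ((Q.coeff 1 : K) : F) :=
  reduction_lemma_transcendental_case_general F δ hadd hmul K hKδ η htrans p hp hδη c hc f hf Q R B
    hRB hcop hrep
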